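/- arXiv:2510.20756 — 6 statements merged into one kernel-verified Lean document; each statement's English description precedes it below -/
import Mathlib

section
/- Let S² denote the unit sphere Metric.sphere 0 1 in EuclideanSpace ℝ (Fin 3), and let L denote the unit circle Metric.sphere (0 : ℂ) 1 in ℂ. Suppose φ assigns to each η ∈ S² a map φ_η : ℂ → ℂ such that: (i) the map (η, z) ↦ φ_η(z) is continuous on S² × ℂ; (ii) each φ_η is a bijection of ℂ with continuous inverse; (iii) each φ_η preserves the Lebesgue measure (MeasureTheory.volume) on ℂ; and (iv) φ_{-η}(z) = -(φ_η(-z)) for all η ∈ S² and z ∈ ℂ (equivariance φ_{-η} = a ∘ φ_η ∘ a for the antipodal map a(z) = -z). Then there exist two distinct points η₁ ≠ η₂ in S² such that (φ_{η₁} '' L) ∩ L ≠ ∅ and (φ_{η₂} '' L) ∩ L ≠ ∅. -/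
open MeasureTheory Metric Set



lemma rank_c : (1 : Cardinal) < Module.rank ℝ ℂ := by
  rw [Complex.rank_real_complex]; exact Cardinal.one_lt_two

lemma compl_closedBall_pathConnected {r : ℝ} (hr : 0 ≤ r) :
    IsPathConnected ((closedBall (0:ℂ) r)ᶜ) := by
  have h0 : IsPathConnected ({(0:ℂ)}ᶜ : Set ℂ) :=
    isPathConnected_compl_singleton_of_one_lt_rank rank_c 0
  have hcont : ContinuousOn (fun y : ℂ => ((r / ‖y‖ : ℝ) + 1 : ℂ) * y) {(0:ℂ)}ᶜ := by
    apply ContinuousOn.mul _ continuousOn_id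
    apply ContinuousOn.add _ continuousOn_const
    apply Complex.continuous_ofReal.comp_continuousOn
    apply continuousOn_const.div (continuous_norm.continuousOn)
    intro y hy
    simpa [norm_eq_zero] using hy
  have himg : (fun y : ℂ => ((r / ‖y‖ : ℝ) + 1 : ℂ) * y) '' {(0:ℂ)}ᶜ
      = (closedBall (0:ℂ) r)ᶜ := by
    ext z
    simp only [mem_image, mem_compl_iff, mem_singleton_iff, mem_closedBall,
      Complex.dist_eq, sub_zero, not_le]
    constructor
    · rintro ⟨y, hy, rfl⟩
      have hy' : 0 < ‖y‖ := by
        simpa [norm_pos_iff] using hy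
      have : ‖(((r / ‖y‖ : ℝ) + 1 : ℂ) * y)‖
          = (r / ‖y‖ + 1) * ‖y‖ := by
        rw [norm_mul]
        congr 1
        rw [← Complex.ofReal_one, ← Complex.ofReal_add, Complex.norm_real, Real.norm_eq_abs]
        exact abs_of_nonneg (by positivity)
      rw [this, add_mul, div_mul_cancel₀ _ hy'.ne', one_mul]
      linarith
    · rintro hz
      have hz0 : (0:ℝ) < ‖z‖ := lt_of_le_of_lt hr hz
      refine ⟨((1 : ℝ) - r / ‖z‖ : ℝ) * z, ?_, ?_⟩
      · have : (0:ℝ) < 1 - r / ‖z‖ := by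
          rw [sub_pos, div_lt_one hz0]; exact hz
        intro h
        rw [mul_eq_zero] at h
        rcases h with h | h
        · rw [Complex.ofReal_eq_zero] at h; linarith
        · simp [h] at hz0
      · have hpos : (0:ℝ) < 1 - r / ‖z‖ := by
          rw [sub_pos, div_lt_one hz0]; exact hz
        have habs : ‖(((1 : ℝ) - r / ‖z‖ : ℝ) * z)‖
            = (1 - r / ‖z‖) * ‖z‖ := by
          rw [norm_mul, Complex.norm_real, Real.norm_eq_abs, abs_of_pos hpos]
        have habs' : (1 - r / ‖z‖) * ‖z‖ = ‖z‖ - r := by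
          field_simp
        have hne : ‖z‖ - r ≠ 0 := by linarith
        rw [← mul_assoc]
        convert one_mul z
        rw [habs, habs']
        rw [← Complex.ofReal_one, ← Complex.ofReal_add, ← Complex.ofReal_mul]
        rw [Complex.ofReal_inj]
        field_simp
        ring
  rw [← himg]
  exact h0.image' hcont

lemma rank_c' : (1 : Cardinal) < Module.rank ℝ ℂ := rank_c

lemma stepA (f ψ : ℂ → ℂ) (hf : Continuous f) (hψ : Continuous ψ)
    (hli : Function.LeftInverse ψ f) (hri : Function.RightInverse ψ f)
    (hmp : MeasurePreserving f volume volume)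
    (H : (f '' sphere (0:ℂ) 1) ∩ sphere (0:ℂ) 1 = ∅) :
    1 < ‖f 0‖ := by
  set L : Set ℂ := sphere 0 1 with hLdef
  set B : Set ℂ := ball 0 1 with hBdef
  set C : Set ℂ := closedBall 0 1 with hCdef
  set X : Set ℂ := Cᶜ with hXdef
  have hbij : Function.Bijective f := ⟨hli.injective, hri.surjective⟩
  have e : Homeomorph ℂ ℂ := ⟨⟨f, ψ, hli, hri⟩, hf, hψ⟩
  have hopen : IsOpenMap f := by
    intro U hU
    have : f '' U = ψ ⁻¹' U := by
      ext z
      constructor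
      · rintro ⟨w, hw, rfl⟩; rwa [Set.mem_preimage, hli w]
      · intro hz; exact ⟨ψ z, hz, hri z⟩
    rw [this]; exact hU.preimage hψ
  -- images have the same volume
  have himgvol : ∀ S : Set ℂ, MeasurableSet S → volume (f '' S) = volume S := by
    intro S hS
    have h1 : f '' S = ψ ⁻¹' S := by
      ext z
      constructor
      · rintro ⟨w, hw, rfl⟩; rwa [Set.mem_preimage, hli w]
      · intro hz; exact ⟨ψ z, hz, hri z⟩
    have h2 : MeasurableSet (f '' S) := by rw [h1]; exact hS.preimage hψ.measurable
    have := hmp.measure_preimage h2.nullMeasurableSet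
    rw [Set.preimage_image_eq S hli.injective] at this
    exact this.symm
  have hBopen : IsOpen (f '' B) := hopen _ isOpen_ball
  have hXopen : IsOpen (f '' X) := hopen _ isClosed_closedBall.isOpen_compl
  have hdisjBX : Disjoint (f '' B) (f '' X) := by
    rw [Set.disjoint_image_iff hli.injective]
    exact disjoint_compl_right.mono_left ball_subset_closedBall
  have hsets : Lᶜ = B ∪ X := by
    ext z
    simp only [hLdef, hBdef, hXdef, hCdef, Set.mem_compl_iff, mem_sphere_zero_iff_norm,
      Set.mem_union, mem_ball_zero_iff, mem_closedBall_zero_iff, not_le]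
    constructor
    · intro h; exact lt_or_gt_of_ne h
    · rintro (h | h) <;> [exact h.ne; exact h.ne']
  have hcomplL : (f '' L)ᶜ = f '' B ∪ f '' X := by
    rw [← Set.image_union, ← Set.image_compl_eq hbij, hsets]
  have hvolB : volume (f '' B) = volume B := himgvol B measurableSet_ball
  have hvolBC : volume B = volume C :=
    (Measure.addHaar_closedBall_eq_addHaar_ball volume (0:ℂ) 1).symm
  have hvolBpos : 0 < volume B := measure_ball_pos volume 0 one_pos
  have hvolBfin : volume B < ⊤ := measure_ball_lt_top
  -- f '' L is connected and misses L
  have hLconn : IsConnected (f '' L) :=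
    ((isConnected_sphere rank_c (0:ℂ) zero_le_one).image f hf.continuousOn)
  have hLsub : f '' L ⊆ B ∪ X := by
    intro w hw
    have hw1 : w ∉ L := fun h => Set.eq_empty_iff_forall_notMem.1 H w ⟨hw, h⟩
    simp only [hLdef, mem_sphere_zero_iff_norm] at hw1
    simp only [hBdef, hXdef, hCdef, Set.mem_union, mem_ball_zero_iff, Set.mem_compl_iff,
      mem_closedBall_zero_iff, not_le]
    exact (lt_or_gt_of_ne hw1).imp id id
  have hcase := hLconn.isPreconnected.subset_or_subset isOpen_ball
    isClosed_closedBall.isOpen_compl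
    (disjoint_compl_right.mono_left ball_subset_closedBall) hLsub
  rcases hcase with hin | hout
  · -- f '' L inside the open unit ball : contradiction
    exfalso
    have hLne : (f '' L).Nonempty := ⟨f 1, 1, by simp [hLdef], rfl⟩
    obtain ⟨w₀, hw₀L, hw₀max⟩ :=
      ((isCompact_sphere (0:ℂ) 1).image hf).exists_isMaxOn hLne
        continuous_norm.continuousOn
    set r : ℝ := ‖w₀‖ with hrdef
    have hr0 : (0:ℝ) ≤ r := norm_nonneg _
    have hr1 : r < 1 := by
      have := hin hw₀L
      simpa [hBdef, mem_ball_zero_iff] using this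
    have hsubr : f '' L ⊆ closedBall 0 r := by
      intro w hw
      simpa [mem_closedBall_zero_iff] using hw₀max hw
    have hXr : IsPreconnected ((closedBall (0:ℂ) r)ᶜ) :=
      (compl_closedBall_pathConnected hr0).isConnected.isPreconnected
    have hXrsub : (closedBall (0:ℂ) r)ᶜ ⊆ f '' B ∪ f '' X := by
      rw [← hcomplL]
      exact Set.compl_subset_compl.2 hsubr
    rcases hXr.subset_or_subset hBopen hXopen hdisjBX hXrsub with h1 | h2
    · -- the complement of a small ball cannot fit inside `f '' B`
      have hb1 : ball (2:ℂ) 1 ⊆ (closedBall (0:ℂ) r)ᶜ := by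
        intro z hz
        simp only [Set.mem_compl_iff, mem_closedBall_zero_iff, not_le]
        have hd : dist z 2 < 1 := mem_ball.1 hz
        have h2z : ‖(2:ℂ)‖ - ‖(2:ℂ) - z‖ ≤ ‖z‖ := by
          have := norm_sub_norm_le (2:ℂ) ((2:ℂ) - z)
          simpa using this
        have hn2 : ‖(2:ℂ)‖ = 2 := by norm_num
        have hdz : ‖(2:ℂ) - z‖ < 1 := by
          rw [← dist_eq_norm, dist_comm]
          exact hd
        calc r < 1 := hr1
        _ ≤ ‖z‖ := by rw [hn2] at h2z; linarith
      have hb2 : ball (-2:ℂ) 1 ⊆ (closedBall (0:ℂ) r)ᶜ := by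
        intro z hz
        simp only [Set.mem_compl_iff, mem_closedBall_zero_iff, not_le]
        have hd : dist z (-2) < 1 := mem_ball.1 hz
        have h2z : ‖(-2:ℂ)‖ - ‖(-2:ℂ) - z‖ ≤ ‖z‖ := by
          have := norm_sub_norm_le (-2:ℂ) ((-2:ℂ) - z)
          simpa using this
        have hn2 : ‖(-2:ℂ)‖ = 2 := by norm_num
        have hdz : ‖(-2:ℂ) - z‖ < 1 := by
          rw [← dist_eq_norm, dist_comm]
          exact hd
        calc r < 1 := hr1
        _ ≤ ‖z‖ := by rw [hn2] at h2z; linarith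
      have hdisj2 : Disjoint (ball (2:ℂ) 1) (ball (-2:ℂ) 1) := by
        apply ball_disjoint_ball
        rw [Complex.dist_eq]
        norm_num
      have hun : ball (2:ℂ) 1 ∪ ball (-2:ℂ) 1 ⊆ f '' B :=
        Set.union_subset (fun z hz => h1 (hb1 hz)) (fun z hz => h1 (hb2 hz))
      have hmeas : volume (ball (2:ℂ) 1 ∪ ball (-2:ℂ) 1)
          = volume B + volume B := by
        rw [measure_union hdisj2 measurableSet_ball,
          Measure.addHaar_ball_center volume (2:ℂ) 1,
          Measure.addHaar_ball_center volume (-2:ℂ) 1]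
      have hle : volume B + volume B ≤ volume B := by
        rw [← hmeas, ← hvolB]
        exact measure_mono hun
      have hlt : volume B < volume B + volume B :=
        ENNReal.lt_add_right hvolBfin.ne hvolBpos.ne'
      exact absurd (lt_of_lt_of_le hlt hle) (lt_irrefl _)
    · -- `f '' B` fits inside a ball of radius `r < 1` : volume too small
      have hBsub : f '' B ⊆ closedBall (0:ℂ) r := by
        intro w hw
        by_contra hcon
        exact Set.disjoint_left.1 hdisjBX hw (h2 hcon)
      have hlow : volume B ≤ ENNReal.ofReal (r^2) * volume B := by
        calc volume B = volume (f '' B) := hvolB.symm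
        _ ≤ volume (closedBall (0:ℂ) r) := measure_mono hBsub
        _ = ENNReal.ofReal (r ^ Module.finrank ℝ ℂ) * volume (ball (0:ℂ) 1) :=
            Measure.addHaar_closedBall volume 0 hr0
        _ = ENNReal.ofReal (r^2) * volume B := by rw [Complex.finrank_real_complex]
      have hlt : ENNReal.ofReal (r^2) * volume B < 1 * volume B := by
        rw [ENNReal.mul_lt_mul_iff_left hvolBpos.ne' hvolBfin.ne]
        exact ENNReal.ofReal_lt_one.2 (by nlinarith)
      rw [one_mul] at hlt
      exact absurd (lt_of_le_of_lt hlow hlt) (lt_irrefl _)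
  · -- f '' L lies outside the closed unit ball
    have hCsub : C ⊆ f '' B ∪ f '' X := by
      rw [← hcomplL]
      intro z hz hzL
      exact (hout hzL) hz
    have hCconn : IsPreconnected C := (convex_closedBall (0:ℂ) 1).isPreconnected
    rcases hCconn.subset_or_subset hBopen hXopen hdisjBX hCsub with h1 | h2
    · exfalso
      have hvolCfin : volume C ≠ ⊤ := measure_closedBall_lt_top.ne
      have hdiff0 : volume (f '' B \ C) = 0 := by
        rw [measure_diff h1 measurableSet_closedBall.nullMeasurableSet hvolCfin,
          hvolB, hvolBC]
        simp
      have h1mem : (1:ℂ) ∈ f '' B := h1 (by simp [hCdef, mem_closedBall_zero_iff])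
      obtain ⟨ε, hε, hball⟩ := Metric.isOpen_iff.1 hBopen 1 h1mem
      set w : ℂ := ((1 + ε/2 : ℝ) : ℂ) with hwdef
      have hsmall : ball w (ε/4) ⊆ f '' B := by
        apply subset_trans (ball_subset_ball' _) hball
        rw [Complex.dist_eq]
        have : (w - 1 : ℂ) = ((ε/2 : ℝ) : ℂ) := by
          rw [hwdef]; push_cast; ring
        rw [this, Complex.norm_real, Real.norm_eq_abs, abs_of_pos (by linarith)]
        linarith
      have hdisjC : ball w (ε/4) ⊆ f '' B \ C := by
        intro z hz
        refine ⟨hsmall hz, ?_⟩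
        simp only [hCdef, mem_closedBall_zero_iff, not_le]
        have hd : dist z w < ε/4 := mem_ball.1 hz
        have hwn : ‖w‖ = 1 + ε/2 := by
          rw [hwdef, Complex.norm_real, Real.norm_eq_abs, abs_of_pos (by linarith)]
        have : ‖w‖ - ‖w - z‖ ≤ ‖z‖ := by
          have := norm_sub_norm_le w (w - z)
          simpa using this
        have hwz : ‖w - z‖ < ε/4 := by
          rw [← dist_eq_norm, dist_comm]
          exact hd
        rw [hwn] at this
        linarith
      have hmm : volume (ball w (ε/4)) ≤ volume (f '' B \ C) :=
        measure_mono hdisjC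
      rw [hdiff0] at hmm
      exact absurd (lt_of_lt_of_le (measure_ball_pos volume w (by linarith : (0:ℝ) < ε/4)) hmm)
        (lt_irrefl _)
    · have hf0 : f 0 ∈ f '' B := ⟨0, by simp [hBdef, mem_ball_zero_iff], rfl⟩
      have hf0C : f 0 ∉ C := fun hc => Set.disjoint_left.1 hdisjBX hf0 (h2 hc)
      simpa [hCdef, mem_closedBall_zero_iff, not_le] using hf0C

lemma stepC (F : ℂ → ℂ) (hF : ContinuousOn F (closedBall (0:ℂ) 1))
    (hbig : ∀ z ∈ closedBall (0:ℂ) 1, 1 < ‖F z‖)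
    (hodd : ∀ z ∈ sphere (0:ℂ) 1, F (-z) = -(F z)) : False := by
  set D : Set ℂ := closedBall 0 1 with hDdef
  have hFne : ∀ z ∈ D, F z ≠ 0 := by
    intro z hz h0
    have := hbig z hz
    rw [h0, norm_zero] at this
    linarith
  -- uniform continuity
  have huc : UniformContinuousOn F D :=
    (isCompact_closedBall 0 1).uniformContinuousOn_of_continuous hF
  rw [Metric.uniformContinuousOn_iff] at huc
  obtain ⟨δ, hδ0, hδ⟩ := huc 1 one_pos
  obtain ⟨N', hN'⟩ := exists_nat_one_div_lt hδ0
  set N : ℕ := N' + 1 with hNdef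
  have hNpos : (0:ℝ) < N := by positivity
  have hNδ : (1:ℝ)/N < δ := by exact_mod_cast hN'
  set sc : ℕ → ℂ → ℂ := fun k z => ((k:ℂ)/(N:ℂ)) * z with hscdef
  have hscnorm : ∀ (k : ℕ) (z : ℂ), ‖sc k z‖ = (k:ℝ)/N * ‖z‖ := by
    intro k z
    rw [hscdef]
    simp only [norm_mul, norm_div, Complex.norm_natCast]
  have hscmem : ∀ z ∈ D, ∀ k, k ≤ N → sc k z ∈ D := by
    intro z hz k hk
    rw [hDdef, mem_closedBall_zero_iff] at hz ⊢
    rw [hscnorm]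
    have h1 : (k:ℝ)/N ≤ 1 := by
      rw [div_le_one hNpos]
      exact_mod_cast hk
    have := mul_le_mul h1 hz (norm_nonneg z) zero_le_one
    simpa using this
  have hscdist : ∀ z ∈ D, ∀ k : ℕ, dist (sc (k+1) z) (sc k z) < δ := by
    intro z hz k
    rw [hDdef, mem_closedBall_zero_iff] at hz
    rw [dist_eq_norm]
    have : sc (k+1) z - sc k z = ((1:ℂ)/(N:ℂ)) * z := by
      rw [hscdef]
      push_cast
      ring
    rw [this]
    have : ‖((1:ℂ)/(N:ℂ)) * z‖ = 1/N * ‖z‖ := by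
      simp only [norm_mul, norm_div, Complex.norm_natCast, norm_one]
    rw [this]
    calc 1/(N:ℝ) * ‖z‖ ≤ 1/N * 1 := by
          apply mul_le_mul_of_nonneg_left hz (by positivity)
    _ = 1/N := mul_one _
    _ < δ := hNδ
  set ratio : ℕ → ℂ → ℂ := fun k z => F (sc (k+1) z) / F (sc k z) with hratiodef
  have hratio_near : ∀ z ∈ D, ∀ k, k < N → ‖ratio k z - 1‖ < 1 := by
    intro z hz k hk
    have hk1 : k + 1 ≤ N := hk
    have hkN : k ≤ N := le_of_lt hk
    have ha : sc (k+1) z ∈ D := hscmem z hz _ hk1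
    have hb : sc k z ∈ D := hscmem z hz _ hkN
    have hbne : F (sc k z) ≠ 0 := hFne _ hb
    have hdist : dist (F (sc (k+1) z)) (F (sc k z)) < 1 :=
      hδ _ ha _ hb (hscdist z hz k)
    rw [hratiodef]
    have heq : F (sc (k+1) z) / F (sc k z) - 1
        = (F (sc (k+1) z) - F (sc k z)) / F (sc k z) := by
      field_simp
    rw [heq, norm_div]
    rw [dist_eq_norm] at hdist
    have hb1 : (1:ℝ) < ‖F (sc k z)‖ := hbig _ hb
    rw [div_lt_one (by linarith)]
    linarith
  have hratio_slit : ∀ z ∈ D, ∀ k, k < N → ratio k z ∈ Complex.slitPlane := by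
    intro z hz k hk
    have h1 := hratio_near z hz k hk
    rw [Complex.mem_slitPlane_iff]
    left
    have : |(ratio k z - 1).re| ≤ ‖ratio k z - 1‖ := Complex.abs_re_le_norm _
    have h2 : (ratio k z - 1).re = (ratio k z).re - 1 := by simp
    rw [h2] at this
    have habs := abs_lt.1 (lt_of_le_of_lt this h1)
    linarith [habs.1]
  have hratio_ne : ∀ z ∈ D, ∀ k, k < N → ratio k z ≠ 0 := by
    intro z hz k hk
    exact div_ne_zero (hFne _ (hscmem z hz _ hk)) (hFne _ (hscmem z hz _ (le_of_lt hk)))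
  set G : ℂ → ℂ := fun z =>
    Complex.log (F 0) + ∑ k ∈ Finset.range N, Complex.log (ratio k z) with hGdef
  have hsccont : ∀ k : ℕ, Continuous (sc k) := by
    intro k
    exact continuous_const.mul continuous_id
  have hFsccont : ∀ k, k ≤ N → ContinuousOn (fun z => F (sc k z)) D := by
    intro k hk
    apply hF.comp (hsccont k).continuousOn
    intro z hz
    exact hscmem z hz k hk
  have hratiocont : ∀ k, k < N → ContinuousOn (ratio k) D := by
    intro k hk
    apply (hFsccont (k+1) hk).div (hFsccont k (le_of_lt hk))
    intro z hz
    exact hFne _ (hscmem z hz k (le_of_lt hk))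
  have hGcont : ContinuousOn G D := by
    apply continuousOn_const.add
    apply continuousOn_finset_sum
    intro k hk
    rw [Finset.mem_range] at hk
    exact (hratiocont k hk).clog (fun z hz => hratio_slit z hz k hk)
  have hexp : ∀ z ∈ D, Complex.exp (G z) = F z := by
    intro z hz
    have key : ∀ m, m ≤ N →
        Complex.exp (Complex.log (F 0) + ∑ k ∈ Finset.range m, Complex.log (ratio k z))
          = F (sc m z) := by
      intro m
      induction m with
      | zero =>
        intro _
        simp only [Finset.range_zero, Finset.sum_empty, add_zero]
        rw [Complex.exp_log (hFne 0 (by simp [hDdef]))]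
        congr 1
        rw [hscdef]
        simp
      | succ m ih =>
        intro hm
        have hmN : m < N := hm
        rw [Finset.sum_range_succ, ← add_assoc, Complex.exp_add,
          ih (le_of_lt hmN), Complex.exp_log (hratio_ne z hz m hmN), hratiodef]
        exact mul_div_cancel₀ _ (hFne _ (hscmem z hz m (le_of_lt hmN)))
    have := key N le_rfl
    rw [hGdef]
    rw [this]
    congr 1
    rw [hscdef]
    have hNne : (N:ℂ) ≠ 0 := by
      exact Nat.cast_ne_zero.2 (Nat.succ_ne_zero N')
    field_simp
  -- the antipodal comparison function on the circle
  set p : ℂ → ℂ := fun z => G (-z) - G z with hpdef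
  have hLD : sphere (0:ℂ) 1 ⊆ D := sphere_subset_closedBall
  have hnegL : ∀ z ∈ sphere (0:ℂ) 1, -z ∈ sphere (0:ℂ) 1 := by
    intro z hz
    rw [mem_sphere_zero_iff_norm] at hz ⊢
    simpa using hz
  have hexpp : ∀ z ∈ sphere (0:ℂ) 1, Complex.exp (p z) = -1 := by
    intro z hz
    rw [hpdef, Complex.exp_sub, hexp _ (hLD (hnegL z hz)), hexp _ (hLD hz),
      hodd z hz, neg_div, div_self (hFne _ (hLD hz))]
  have hre : ∀ z ∈ sphere (0:ℂ) 1, (p z).re = 0 := by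
    intro z hz
    have h1 : ‖Complex.exp (p z)‖ = 1 := by
      rw [hexpp z hz]
      simp
    rw [Complex.norm_exp] at h1
    exact (Real.exp_eq_one_iff _).1 h1
  have hcontp : ContinuousOn p (sphere (0:ℂ) 1) := by
    apply ContinuousOn.sub
    · apply hGcont.comp continuous_neg.continuousOn
      intro z hz
      exact hLD (hnegL z hz)
    · exact hGcont.mono hLD
  set g : ℂ → ℝ := fun z => (p z).im with hgdef
  have hgcont : ContinuousOn g (sphere (0:ℂ) 1) :=
    Complex.continuous_im.comp_continuousOn hcontp
  have h1L : (1:ℂ) ∈ sphere (0:ℂ) 1 := by simp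
  have hm1L : (-1:ℂ) ∈ sphere (0:ℂ) 1 := by simp
  have hganti : g (-1) = - g 1 := by
    rw [hgdef, hpdef]
    simp only [neg_neg]
    rw [← Complex.neg_im, neg_sub]
  have hg1ne : g 1 ≠ 0 := by
    intro h0
    have hp1 : p 1 = 0 := by
      apply Complex.ext
      · rw [hre 1 h1L]; simp
      · simp only [Complex.zero_im]; exact h0
    have := hexpp 1 h1L
    rw [hp1, Complex.exp_zero] at this
    norm_num at this
  -- intermediate value theorem on the connected circle
  have himg : IsPreconnected (g '' sphere (0:ℂ) 1) :=
    ((isConnected_sphere rank_c' (0:ℂ) zero_le_one).image g hgcont).isPreconnected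
  have hord : (g '' sphere (0:ℂ) 1).OrdConnected := himg.ordConnected
  have hmem1 : g 1 ∈ g '' sphere (0:ℂ) 1 := ⟨1, h1L, rfl⟩
  have hmem2 : -g 1 ∈ g '' sphere (0:ℂ) 1 := by
    rw [← hganti]; exact ⟨-1, hm1L, rfl⟩
  have h0mem : (0:ℝ) ∈ g '' sphere (0:ℂ) 1 := by
    rcases lt_or_gt_of_ne hg1ne with h | h
    · exact hord.out hmem1 hmem2 ⟨le_of_lt h, by linarith⟩
    · exact hord.out hmem2 hmem1 ⟨by linarith, le_of_lt h⟩
  obtain ⟨z₀, hz₀L, hz₀⟩ := h0mem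
  have hp0 : p z₀ = 0 := by
    apply Complex.ext
    · rw [hre z₀ hz₀L]; simp
    · simp only [Complex.zero_im]; exact hz₀
  have := hexpp z₀ hz₀L
  rw [hp0, Complex.exp_zero] at this
  norm_num at this



noncomputable def uPar (z : ℂ) : EuclideanSpace ℝ (Fin 3) :=
  (WithLp.equiv 2 (Fin 3 → ℝ)).symm ![z.re, z.im, Real.sqrt (1 - z.re^2 - z.im^2)]

lemma uPar_apply (z : ℂ) (i : Fin 3) :
    uPar z i = ![z.re, z.im, Real.sqrt (1 - z.re^2 - z.im^2)] i :=
  rfl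

lemma uPar_cont : Continuous uPar := by
  apply (PiLp.continuous_toLp 2 (fun _ : Fin 3 => ℝ)).comp
  apply continuous_pi
  intro i
  fin_cases i
  · simpa using Complex.continuous_re
  · simpa using Complex.continuous_im
  · simp only [Matrix.cons_val_two, Matrix.tail_cons, Matrix.head_cons]
    apply Real.continuous_sqrt.comp
    fun_prop

lemma uPar_mem {z : ℂ} (hz : z ∈ closedBall (0:ℂ) 1) :
    uPar z ∈ sphere (0 : EuclideanSpace ℝ (Fin 3)) 1 := by
  rw [mem_closedBall_zero_iff] at hz
  rw [mem_sphere_zero_iff_norm, EuclideanSpace.norm_eq]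
  have hsq : z.re^2 + z.im^2 ≤ 1 := by
    have h1 : z.re^2 + z.im^2 = ‖z‖^2 := by
      rw [Complex.sq_norm, Complex.normSq_apply]; ring
    nlinarith [norm_nonneg z]
  have ht : (0:ℝ) ≤ 1 - z.re^2 - z.im^2 := by linarith
  rw [Fin.sum_univ_three]
  simp only [uPar_apply, Matrix.cons_val_zero, Matrix.cons_val_one, Matrix.head_cons,
    Matrix.cons_val_two, Matrix.tail_cons, Real.norm_eq_abs, sq_abs]
  rw [Real.sq_sqrt ht]
  rw [show z.re^2 + z.im^2 + (1 - z.re^2 - z.im^2) = 1 by ring]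
  exact Real.sqrt_one

lemma uPar_neg {z : ℂ} (hz : z ∈ sphere (0:ℂ) 1) : uPar (-z) = - uPar z := by
  rw [mem_sphere_zero_iff_norm] at hz
  have h0 : 1 - z.re^2 - z.im^2 = 0 := by
    have h1 : z.re^2 + z.im^2 = ‖z‖^2 := by
      rw [Complex.sq_norm, Complex.normSq_apply]; ring
    rw [hz] at h1
    nlinarith
  ext i
  rw [show ((- uPar z) i) = -(uPar z i) from rfl, uPar_apply, uPar_apply]
  have h2 : ∀ a b c d e f : ℝ, a = -d → b = -e → c = -f →
      ![a, b, c] i = -(![d, e, f] i) := by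
    intro a b c d e f ha hb hc
    fin_cases i <;> simp [ha, hb, hc]
  apply h2
  · exact Complex.neg_re z
  · exact Complex.neg_im z
  · have e1 : 1 - (-z).re^2 - (-z).im^2 = 1 - z.re^2 - z.im^2 := by
      rw [Complex.neg_re, Complex.neg_im]; ring
    rw [e1, h0, Real.sqrt_zero, neg_zero]

/-- Proposition B.1: a family of area-preserving homeomorphisms of `ℂ` parametrized by the
two-sphere, equivariant with respect to the antipodal maps, cannot displace the unit circle
except possibly at fewer than two parameters. -/
theorem stmt0
    (φ : EuclideanSpace ℝ (Fin 3) → ℂ → ℂ)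
    (hcont : ContinuousOn (fun p : EuclideanSpace ℝ (Fin 3) × ℂ => φ p.1 p.2)
      ((Metric.sphere (0 : EuclideanSpace ℝ (Fin 3)) 1) ×ˢ (Set.univ : Set ℂ)))
    (hbij : ∀ η ∈ Metric.sphere (0 : EuclideanSpace ℝ (Fin 3)) 1,
      Function.Bijective (φ η) ∧
        ∃ ψ : ℂ → ℂ, Continuous ψ ∧ Function.LeftInverse ψ (φ η) ∧
          Function.RightInverse ψ (φ η))
    (hmp : ∀ η ∈ Metric.sphere (0 : EuclideanSpace ℝ (Fin 3)) 1,
      MeasurePreserving (φ η) volume volume)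
    (hequiv : ∀ η ∈ Metric.sphere (0 : EuclideanSpace ℝ (Fin 3)) 1, ∀ z : ℂ,
      φ (-η) z = -(φ η (-z))) :
    ∃ η₁ ∈ Metric.sphere (0 : EuclideanSpace ℝ (Fin 3)) 1,
      ∃ η₂ ∈ Metric.sphere (0 : EuclideanSpace ℝ (Fin 3)) 1,
        η₁ ≠ η₂ ∧
        ((φ η₁ '' Metric.sphere (0 : ℂ) 1) ∩ Metric.sphere (0 : ℂ) 1).Nonempty ∧
        ((φ η₂ '' Metric.sphere (0 : ℂ) 1) ∩ Metric.sphere (0 : ℂ) 1).Nonempty := by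
  -- continuity of each φ η
  have hφcont : ∀ η ∈ Metric.sphere (0 : EuclideanSpace ℝ (Fin 3)) 1,
      Continuous (φ η) := by
    intro η hη
    rw [← continuousOn_univ]
    exact hcont.comp (continuous_const.prodMk continuous_id).continuousOn
      (fun z _ => ⟨hη, Set.mem_univ _⟩)
  -- key : some parameter does not displace the circle
  have key : ∃ η ∈ Metric.sphere (0 : EuclideanSpace ℝ (Fin 3)) 1,
      ((φ η '' Metric.sphere (0 : ℂ) 1) ∩ Metric.sphere (0 : ℂ) 1).Nonempty := by
    by_contra hno
    push_neg at hno
    have hno' : ∀ η ∈ Metric.sphere (0 : EuclideanSpace ℝ (Fin 3)) 1,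
        (φ η '' Metric.sphere (0 : ℂ) 1) ∩ Metric.sphere (0 : ℂ) 1 = ∅ := hno
    set F : ℂ → ℂ := fun z => φ (uPar z) 0 with hFdef
    have hFcont : ContinuousOn F (closedBall (0:ℂ) 1) := by
      apply hcont.comp ((uPar_cont.prodMk continuous_const).continuousOn)
      intro z hz
      exact ⟨uPar_mem hz, Set.mem_univ _⟩
    have hFbig : ∀ z ∈ closedBall (0:ℂ) 1, 1 < ‖F z‖ := by
      intro z hz
      obtain ⟨hb, ψ, hψc, hli, hri⟩ := hbij (uPar z) (uPar_mem hz)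
      exact stepA (φ (uPar z)) ψ (hφcont (uPar z) (uPar_mem hz)) hψc hli hri
        (hmp (uPar z) (uPar_mem hz)) (hno' (uPar z) (uPar_mem hz))
    have hFodd : ∀ z ∈ sphere (0:ℂ) 1, F (-z) = -(F z) := by
      intro z hz
      rw [hFdef]
      simp only
      rw [uPar_neg hz, hequiv (uPar z) (uPar_mem (sphere_subset_closedBall hz)) 0, neg_zero]
    exact stepC F hFcont hFbig hFodd
  obtain ⟨η, hη, w, hwim, hwL⟩ := key
  obtain ⟨w₀, hw₀, hww₀⟩ := hwim
  refine ⟨η, hη, -η, ?_, ?_, ⟨w, ⟨w₀, hw₀, hww₀⟩, hwL⟩, ?_⟩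
  · rw [mem_sphere_zero_iff_norm] at hη ⊢
    simpa using hη
  · intro heq
    have h2 : η + η = 0 := by
      nth_rewrite 2 [heq]
      exact add_neg_cancel η
    have h3 : η = 0 := by
      have := congrArg (fun x => (2:ℝ)⁻¹ • x) (two_smul ℝ η ▸ h2)
      simpa [smul_smul] using this
    rw [mem_sphere_zero_iff_norm, h3] at hη
    simp at hη
  · refine ⟨-w, ⟨-w₀, ?_, ?_⟩, ?_⟩
    · rw [mem_sphere_zero_iff_norm] at hw₀ ⊢
      simpa using hw₀
    · rw [hequiv η hη (-w₀), neg_neg, hww₀]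
    · rw [mem_sphere_zero_iff_norm] at hwL ⊢
      simpa using hwL
end

section
/- Let L denote the unit circle Metric.sphere (0 : ℂ) 1 in ℂ. Suppose ψ : ℂ → ℂ is a bijection with continuous inverse, ψ is continuous, ψ preserves the Lebesgue measure (MeasureTheory.volume) on ℂ, and ψ is odd, i.e. ψ(-z) = -ψ(z) for all z ∈ ℂ. Then (ψ '' L) ∩ L ≠ ∅; that is, there exists z ∈ ℂ with |z| = 1 and |ψ(z)| = 1. -/
open MeasureTheory

lemma aux_inter_frontier {s t : Set ℂ} (hs : IsPreconnected s)
    (h1 : (s ∩ t).Nonempty) (h2 : (s \ t).Nonempty) : (s ∩ frontier t).Nonempty := by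
  by_contra h
  rw [Set.not_nonempty_iff_eq_empty] at h
  have hsub : s ⊆ interior t ∪ (closure t)ᶜ := by
    intro x hx
    by_cases hc : x ∈ closure t
    · left
      by_contra hni
      exact (Set.eq_empty_iff_forall_notMem.1 h x) ⟨hx, hc, hni⟩
    · right; exact hc
  have hdisj : Disjoint (interior t) (closure t)ᶜ :=
    Set.disjoint_left.2 fun x hx hx' => hx' (subset_closure (interior_subset hx))
  rcases hs.subset_or_subset isOpen_interior (isOpen_compl_iff.2 isClosed_closure) hdisj hsub with hl | hr
  · obtain ⟨x, hxs, hxt⟩ := h2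
    exact hxt (interior_subset (hl hxs))
  · obtain ⟨x, hxs, hxt⟩ := h1
    exact (hr hxs) (subset_closure hxt)

/-- Theorem 1.1 for `n = 1`: the unit circle in `ℂ` cannot be displaced from itself by an
area-preserving homeomorphism commuting with the antipodal map `a z = -z`. -/
theorem stmt1 (ψ : ℂ → ℂ) (hbij : Function.Bijective ψ) (hcont : Continuous ψ)
    (hinv : ∃ g : ℂ → ℂ, Continuous g ∧ Function.LeftInverse g ψ ∧ Function.RightInverse g ψ)
    (hmp : MeasurePreserving ψ volume volume)
    (hodd : ∀ z : ℂ, ψ (-z) = -ψ z) :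
    ((ψ '' Metric.sphere (0 : ℂ) 1) ∩ Metric.sphere (0 : ℂ) 1).Nonempty := by
  classical
  by_contra hcon
  rw [Set.not_nonempty_iff_eq_empty] at hcon
  obtain ⟨g, hg, hgl, hgr⟩ := hinv
  set S : Set ℂ := Metric.sphere (0 : ℂ) 1 with hS
  set B : Set ℂ := Metric.ball (0 : ℂ) 1 with hB
  set D : Set ℂ := Metric.closedBall (0 : ℂ) 1 with hD
  have hBD : B ⊆ D := Metric.ball_subset_closedBall
  -- the homeomorphism
  let e : ℂ ≃ₜ ℂ :=
    { toFun := ψ, invFun := g, left_inv := hgl, right_inv := hgr,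
      continuous_toFun := hcont, continuous_invFun := hg }
  -- images preserve measure
  have himg : ∀ s : Set ℂ, MeasurableSet s → volume (ψ '' s) = volume s := by
    intro s hs
    have h1 : ψ '' s = g ⁻¹' s := congrFun (Set.image_eq_preimage_of_inverse hgl hgr) s
    have hge : MeasurePreserving (e.toMeasurableEquiv.symm) volume volume :=
      MeasurePreserving.symm _ hmp
    rw [h1]
    exact hge.measure_preimage hs.nullMeasurableSet
  -- frontier of images
  have hfr : ∀ s : Set ℂ, frontier (ψ '' s) = ψ '' frontier s := by
    intro s
    exact (Homeomorph.image_frontier e s).symm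
  -- basic measure facts
  have hSzero : volume S = 0 := Measure.addHaar_sphere volume 0 1
  have hDB : volume D = volume B := by
    have h1 : volume D ≤ volume B + volume S := by
      rw [hD, hB, hS, ← Metric.ball_union_sphere]; exact measure_union_le _ _
    rw [hSzero, add_zero] at h1
    exact le_antisymm h1 (measure_mono hBD)
  have hBfin : volume B ≠ ⊤ := (measure_ball_lt_top).ne
  have hDfin : volume D ≠ ⊤ := by rw [hDB]; exact hBfin
  -- frontier facts
  have hfrB : frontier B = S := frontier_ball (0 : ℂ) one_ne_zero
  have hfrD : frontier D = S := frontier_closedBall (0 : ℂ) one_ne_zero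
  -- ψ(S) misses S
  have hdis : ∀ x ∈ ψ '' S, x ∉ S := by
    intro x hx hxS
    exact Set.eq_empty_iff_forall_notMem.1 hcon x ⟨hx, hxS⟩
  -- ψ(S) is preconnected
  have hScon : IsPreconnected S :=
    (isConnected_sphere (by rw [Complex.rank_real_complex]; norm_num) (0 : ℂ) zero_le_one).isPreconnected
  have hψScon : IsPreconnected (ψ '' S) := hScon.image ψ hcont.continuousOn
  -- ψ(S) ⊆ B or ψ(S) ⊆ Dᶜ
  have hsplit : ψ '' S ⊆ B ∨ ψ '' S ⊆ Dᶜ := by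
    apply hψScon.subset_or_subset Metric.isOpen_ball
      (Metric.isClosed_closedBall (x := (0:ℂ)) (ε := 1)).isOpen_compl
    · exact Set.disjoint_left.2 fun x hx hx' => hx' (hBD hx)
    · intro x hx
      rcases lt_trichotomy ‖x‖ 1 with h | h | h
      · left; simpa [hB, Complex.dist_eq] using h
      · exact absurd (by simpa [hS, Complex.dist_eq] using h) (hdis x hx)
      · right
        simp only [hD, Set.mem_compl_iff, Metric.mem_closedBall, Complex.dist_eq, sub_zero]
        exact not_le.2 h
  have hSne : S.Nonempty := ⟨1, by simp [hS]⟩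
  rcases hsplit with hin | hout
  · -- Case A: ψ(S) ⊆ B.  Let K = ψ '' D.
    set K : Set ℂ := ψ '' D with hK
    have hKcpt : IsCompact K := (isCompact_closedBall (0:ℂ) 1).image hcont
    have hKclosed : IsClosed K := hKcpt.isClosed
    have hfrK : frontier K = ψ '' S := by rw [hK, hfr, hfrD]
    -- Step 1: K ⊆ D, via rays to infinity
    have hKD : K ⊆ D := by
      intro x hx
      by_contra hxD
      have hxnorm : 1 < ‖x‖ := by
        simpa [hD, Complex.dist_eq, not_le] using hxD
      obtain ⟨M, hM⟩ := hKcpt.isBounded.subset_closedBall (0:ℂ)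
      set R : Set ℂ := (fun t : ℝ => t • x) '' Set.Ici 1 with hR
      have hRcon : IsPreconnected R :=
        (isPreconnected_Ici).image _ ((continuous_id.smul continuous_const).continuousOn)
      have hxR : x ∈ R := ⟨1, Set.self_mem_Ici, one_smul ℝ x⟩
      have hRbig : ∀ z ∈ R, 1 < ‖z‖ := by
        rintro z ⟨t, ht, rfl⟩
        rw [norm_smul, Real.norm_eq_abs, abs_of_pos (lt_of_lt_of_le one_pos ht)]
        calc (1:ℝ) < ‖x‖ := hxnorm
        _ = 1 * ‖x‖ := (one_mul _).symm
        _ ≤ t * ‖x‖ := by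
            apply mul_le_mul_of_nonneg_right ht (norm_nonneg x)
      -- a far point of R outside K
      have hfar : ∃ z ∈ R, z ∉ K := by
        obtain ⟨t, ht1, ht2⟩ : ∃ t : ℝ, 1 ≤ t ∧ |M| + 1 ≤ t :=
          ⟨max 1 (|M| + 1), le_max_left _ _, le_max_right _ _⟩
        refine ⟨t • x, ⟨t, ht1, rfl⟩, fun hzK => ?_⟩
        have h1 : ‖t • x‖ ≤ M := by
          have := hM hzK
          simpa [Complex.dist_eq] using this
        have h2 : |M| + 1 ≤ ‖t • x‖ := by
          rw [norm_smul, Real.norm_eq_abs, abs_of_pos (lt_of_lt_of_le one_pos ht1)]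
          calc |M| + 1 = (|M| + 1) * 1 := (mul_one _).symm
          _ ≤ t * ‖x‖ := mul_le_mul ht2 hxnorm.le zero_le_one
              (le_trans zero_le_one ht1)
        have := le_trans h2 (le_trans h1 (le_abs_self M))
        linarith
      obtain ⟨z, hzR, hzK⟩ := hfar
      obtain ⟨w, hwR, hwF⟩ := aux_inter_frontier hRcon ⟨x, hxR, hx⟩ ⟨z, hzR, hzK⟩
      rw [hfrK] at hwF
      have hw1 : 1 < ‖w‖ := hRbig w hwR
      have hw2 : ‖w‖ < 1 := by
        have := hin hwF
        simpa [hB, Complex.dist_eq] using this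
      linarith
    -- Step 2: measure argument gives B ⊆ K
    have hKmeas : volume K = volume D := himg D measurableSet_closedBall
    have hKB : volume (K ∩ B) = volume B := by
      have h1 : volume K ≤ volume (K ∩ B) + volume (K \ B) := by
        conv_lhs => rw [← Set.inter_union_diff K B]
        exact measure_union_le _ _
      have h2 : volume (K \ B) = 0 := by
        apply measure_mono_null _ hSzero
        intro x ⟨hxK, hxB⟩
        have hxD := hKD hxK
        rw [hD, ← Metric.ball_union_sphere] at hxD
        exact hxD.resolve_left hxB
      rw [h2, add_zero, hKmeas, hDB] at h1
      exact le_antisymm (measure_mono Set.inter_subset_right) h1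
    have hBK : B ⊆ K := by
      by_contra hns
      obtain ⟨x, hxB, hxK⟩ := Set.not_subset.1 hns
      have hopen : IsOpen (B \ K) := Metric.isOpen_ball.sdiff hKclosed
      have hz : volume (B \ K) = 0 := by
        have hmd := measure_diff (μ := volume) (Set.inter_subset_left (s := B) (t := K))
          (Metric.isOpen_ball.measurableSet.inter hKclosed.measurableSet).nullMeasurableSet
          (by rw [Set.inter_comm B K, hKB]; exact hBfin)
        have heq : B \ (B ∩ K) = B \ K := by
          ext y; simp only [Set.mem_diff, Set.mem_inter_iff, not_and]; tauto
        rw [heq] at hmd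
        rw [hmd, Set.inter_comm B K, hKB, tsub_self]
      exact absurd hz (hopen.measure_pos volume ⟨x, hxB, hxK⟩).ne'
    -- conclude K = D, frontier contradiction
    have hKeqD : K = D := by
      apply le_antisymm hKD
      have : closure B ⊆ K := hKclosed.closure_subset_iff.2 hBK
      rwa [closure_ball (0:ℂ) one_ne_zero] at this
    have : (1 : ℂ) ∈ ψ '' S := by rw [← hfrK, hKeqD, hfrD]; simp [hS]
    have h1B : (1:ℂ) ∈ B := hin this
    simp [hB, Complex.dist_eq] at h1B
  · -- Case B: ψ(S) ⊆ Dᶜ.  Let U = ψ '' B.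
    set U : Set ℂ := ψ '' B with hU
    have hUopen : IsOpen U := by
      rw [hU, congrFun (Set.image_eq_preimage_of_inverse hgl hgr) B]
      exact Metric.isOpen_ball.preimage hg
    have hfrU : frontier U = ψ '' S := by rw [hU, hfr, hfrB]
    have hψ0 : ψ 0 = 0 := by
      have h := hodd 0
      rw [neg_zero] at h
      linear_combination h / 2
    have h0U : (0:ℂ) ∈ U := ⟨0, by simp [hB], hψ0⟩
    -- D ⊆ U
    have hDU : D ⊆ U := by
      by_contra hns
      obtain ⟨x, hxD, hxU⟩ := Set.not_subset.1 hns
      have hDcon : IsPreconnected D := (convex_closedBall (0:ℂ) 1).isPreconnected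
      obtain ⟨w, hwD, hwF⟩ := aux_inter_frontier hDcon
        ⟨0, Metric.mem_closedBall_self zero_le_one, h0U⟩ ⟨x, hxD, hxU⟩
      rw [hfrU] at hwF
      exact (hout hwF) hwD
    -- measure argument: U ⊆ D
    have hUmeas : volume U = volume B := himg B Metric.isOpen_ball.measurableSet
    have hUD : U ⊆ D := by
      by_contra hns
      obtain ⟨x, hxU, hxD⟩ := Set.not_subset.1 hns
      have hopen : IsOpen (U \ D) := hUopen.sdiff Metric.isClosed_closedBall
      have hz : volume (U \ D) = 0 := by
        have := measure_diff hDU Metric.isClosed_closedBall.measurableSet.nullMeasurableSet hDfin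
        rw [this, hUmeas, ← hDB, tsub_self]
      exact absurd hz (hopen.measure_pos volume ⟨x, hxU, hxD⟩).ne'
    -- U = D, contradiction: D open
    have hUeqD : U = D := le_antisymm hUD hDU
    have : (1:ℂ) ∈ ψ '' S := by rw [← hfrU, hUeqD, hfrD]; simp [hS]
    have h1D : (1:ℂ) ∈ Dᶜ := hout this
    simp [hD, Complex.dist_eq] at h1D
end

section
/- Let f : ℂ → ℂ be continuous on the closed unit disk Metric.closedBall (0 : ℂ) 1, complex-differentiable on the open unit disk Metric.ball (0 : ℂ) 1, and suppose that f takes purely imaginary values on the unit circle: (f z).re = 0 for all z ∈ Metric.sphere (0 : ℂ) 1. Then f is constant on the closed unit disk with purely imaginary value: there exists c : ℝ such that f z = c • Complex.I for all z ∈ Metric.closedBall (0 : ℂ) 1. -/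
/-- The kernel of the Cauchy–Riemann operator on maps `(D, ∂D) → (ℂ, iℝ)`: a function
continuous on the closed unit disk, holomorphic on the open unit disk, and purely imaginary
on the unit circle is a purely imaginary constant. -/
theorem stmt3 (f : ℂ → ℂ)
    (hc : ContinuousOn f (Metric.closedBall (0 : ℂ) 1))
    (hd : DifferentiableOn ℂ f (Metric.ball (0 : ℂ) 1))
    (hb : ∀ z ∈ Metric.sphere (0 : ℂ) 1, (f z).re = 0) :
    ∃ c : ℝ, ∀ z ∈ Metric.closedBall (0 : ℂ) 1, f z = c • Complex.I := by
  have hcl : closure (Metric.ball (0 : ℂ) 1) = Metric.closedBall (0 : ℂ) 1 :=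
    closure_ball 0 one_ne_zero
  have hfr : frontier (Metric.ball (0 : ℂ) 1) = Metric.sphere (0 : ℂ) 1 :=
    frontier_ball 0 one_ne_zero
  -- Step 1: Re f = 0 on the closed ball, via max modulus applied to exp(±f)
  have hre : ∀ z ∈ Metric.closedBall (0 : ℂ) 1, (f z).re = 0 := by
    intro z hz
    have hz' : z ∈ closure (Metric.ball (0 : ℂ) 1) := hcl ▸ hz
    have h1 : DiffContOnCl ℂ (fun w => Complex.exp (f w)) (Metric.ball (0 : ℂ) 1) :=
      ⟨(Complex.differentiable_exp.comp_differentiableOn hd),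
        Complex.continuous_exp.comp_continuousOn (hcl ▸ hc)⟩
    have h2 : DiffContOnCl ℂ (fun w => Complex.exp (-f w)) (Metric.ball (0 : ℂ) 1) :=
      ⟨(Complex.differentiable_exp.comp_differentiableOn hd.neg),
        Complex.continuous_exp.comp_continuousOn (hcl ▸ hc.neg)⟩
    have hle1 : ‖Complex.exp (f z)‖ ≤ 1 := by
      refine Complex.norm_le_of_forall_mem_frontier_norm_le Metric.isBounded_ball h1 ?_ hz'
      intro w hw
      rw [hfr] at hw
      simp [Complex.norm_exp, hb w hw]
    have hle2 : ‖Complex.exp (-f z)‖ ≤ 1 := by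
      refine Complex.norm_le_of_forall_mem_frontier_norm_le Metric.isBounded_ball h2 ?_ hz'
      intro w hw
      rw [hfr] at hw
      simp [Complex.norm_exp, hb w hw]
    rw [Complex.norm_exp] at hle1 hle2
    simp only [Complex.neg_re] at hle2
    have e1 : (f z).re ≤ 0 := Real.exp_le_one_iff.mp hle1
    have e2 : -(f z).re ≤ 0 := Real.exp_le_one_iff.mp hle2
    linarith
  -- Step 2: f is constant on the open ball by the open mapping theorem
  have han : AnalyticOnNhd ℂ f (Metric.ball (0 : ℂ) 1) :=
    hd.analyticOnNhd Metric.isOpen_ball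
  have hconn : IsPreconnected (Metric.ball (0 : ℂ) 1) :=
    (convex_ball (0 : ℂ) 1).isPreconnected
  obtain ⟨w, hw⟩ : ∃ w, ∀ z ∈ Metric.ball (0 : ℂ) 1, f z = w := by
    rcases han.is_constant_or_isOpen hconn with h | h
    · exact h
    · exfalso
      have hopen : IsOpen (f '' Metric.ball (0 : ℂ) 1) :=
        h _ le_rfl Metric.isOpen_ball
      have hmem : f 0 ∈ f '' Metric.ball (0 : ℂ) 1 :=
        ⟨0, by simp, rfl⟩
      rcases Metric.isOpen_iff.mp hopen _ hmem with ⟨ε, hε, hball⟩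
      have : f 0 + (ε / 2 : ℝ) ∈ f '' Metric.ball (0 : ℂ) 1 := by
        apply hball
        simp only [Metric.mem_ball, Complex.dist_eq, add_sub_cancel_left]
        rw [Complex.norm_real, Real.norm_eq_abs, abs_of_nonneg (by positivity : (0:ℝ) ≤ ε/2)]
        linarith
      rcases this with ⟨y, hy, hfy⟩
      have h0 : (f y).re = 0 := hre y (Metric.ball_subset_closedBall hy)
      have h1 : (f 0).re = 0 := hre 0 (by simp)
      rw [hfy] at h0
      simp [Complex.add_re, h1] at h0
      linarith
  -- Step 3: extend constancy to the closed ball by continuity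
  have heq : Set.EqOn f (fun _ => w) (Metric.closedBall (0 : ℂ) 1) := by
    apply Set.EqOn.of_subset_closure (hw : Set.EqOn f (fun _ => w) (Metric.ball (0 : ℂ) 1))
      hc continuousOn_const Metric.ball_subset_closedBall (by rw [hcl])
  have hw0 : w = f 0 := (heq (by simp)).symm
  have hwre : w.re = 0 := by rw [hw0]; exact hre 0 (by simp)
  refine ⟨w.im, fun z hz => ?_⟩
  rw [heq hz]
  apply Complex.ext <;> simp [hwre]
end

section
/- Let R := Polynomial (ZMod 2) and let M := Fin 4 → R be the free R-module with standard basis vectors denoted x₀, x₁, y₀, y₁. Let D : M →ₗ[R] M be the R-linear map determined on the basis by D x₀ = D x₁ = (y₀ + y₁) + X • (x₀ + x₁) and D y₀ = D y₁ = X • (y₀ + y₁), where X = Polynomial.X. Then D ∘ D = 0, and the homology module (LinearMap.ker D) ⧸ (the submodule of ker D induced by LinearMap.range D) is isomorphic as an R-module to R ⧸ Ideal.span {X ^ 2}, via an isomorphism sending the class of x₀ + x₁ to the class of 1. -/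
open Polynomial

set_option maxHeartbeats 1000000

/-- Lemma 3.10: the equivariant Morse complex of the circle over `k[e]` with
`k = ℤ/2ℤ` (generators `x₀, x₁, y₀, y₁`, differential `d xᵢ = y₀ + y₁ + e(x₀ + x₁)`,
`d yᵢ = e(y₀ + y₁)`) squares to zero, and its homology is isomorphic to `k[e]/(e²)`,
the class of `x₀ + x₁` mapping to the class of `1`. -/
theorem stmt5
    (x₀ x₁ y₀ y₁ : Fin 4 → Polynomial (ZMod 2))
    (hx₀ : x₀ = Pi.single 0 1) (hx₁ : x₁ = Pi.single 1 1)
    (hy₀ : y₀ = Pi.single 2 1) (hy₁ : y₁ = Pi.single 3 1)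
    (D : (Fin 4 → Polynomial (ZMod 2)) →ₗ[Polynomial (ZMod 2)] (Fin 4 → Polynomial (ZMod 2)))
    (hDx₀ : D x₀ = (y₀ + y₁) + (X : Polynomial (ZMod 2)) • (x₀ + x₁))
    (hDx₁ : D x₁ = (y₀ + y₁) + (X : Polynomial (ZMod 2)) • (x₀ + x₁))
    (hDy₀ : D y₀ = (X : Polynomial (ZMod 2)) • (y₀ + y₁))
    (hDy₁ : D y₁ = (X : Polynomial (ZMod 2)) • (y₀ + y₁)) :
    D ∘ₗ D = 0 ∧
    ∃ (hker : x₀ + x₁ ∈ LinearMap.ker D)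
      (e : (LinearMap.ker D ⧸
            (LinearMap.range D).comap (LinearMap.ker D).subtype) ≃ₗ[Polynomial (ZMod 2)]
           (Polynomial (ZMod 2) ⧸ Ideal.span {(X : Polynomial (ZMod 2)) ^ 2})),
      e (Submodule.Quotient.mk ⟨x₀ + x₁, hker⟩) =
        Submodule.Quotient.mk (1 : Polynomial (ZMod 2)) := by
  have h2 : (2 : Polynomial (ZMod 2)) = 0 := by
    exact_mod_cast CharP.cast_eq_zero (Polynomial (ZMod 2)) 2
  have hself : ∀ a : Polynomial (ZMod 2), a + a = 0 := fun a => by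
    linear_combination a * h2
  have hm : ∀ m : Fin 4 → Polynomial (ZMod 2),
      m = m 0 • x₀ + m 1 • x₁ + m 2 • y₀ + m 3 • y₁ := by
    intro m; funext i
    fin_cases i <;> simp [hx₀, hx₁, hy₀, hy₁]
  have hD : ∀ m : Fin 4 → Polynomial (ZMod 2), D m = ![X * (m 0 + m 1), X * (m 0 + m 1),
      (m 0 + m 1) + X * (m 2 + m 3), (m 0 + m 1) + X * (m 2 + m 3)] := by
    intro m
    conv_lhs => rw [hm m]
    simp only [map_add, map_smul, hDx₀, hDx₁, hDy₀, hDy₁]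
    funext i
    fin_cases i <;>
      simp [hx₀, hx₁, hy₀, hy₁, Pi.single_apply, smul_eq_mul] <;> ring
  have hDD : D ∘ₗ D = 0 := by
    refine LinearMap.ext fun m => ?_
    rw [LinearMap.comp_apply, hD m, hD, LinearMap.zero_apply]
    funext i
    fin_cases i <;> simp [hself]
  refine ⟨hDD, ?_⟩
  have hker : x₀ + x₁ ∈ LinearMap.ker D := by
    rw [LinearMap.mem_ker, hD]
    funext i
    fin_cases i <;> simp [hx₀, hx₁, hself]
  set I : Ideal (Polynomial (ZMod 2)) := Ideal.span {(X : Polynomial (ZMod 2)) ^ 2} with hI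
  set N := (LinearMap.range D).comap (LinearMap.ker D).subtype with hN
  let g : (Fin 4 → Polynomial (ZMod 2)) →ₗ[Polynomial (ZMod 2)] Polynomial (ZMod 2) :=
    LinearMap.proj 0 + (X : Polynomial (ZMod 2)) • LinearMap.proj 2
  let f : (LinearMap.ker D) →ₗ[Polynomial (ZMod 2)]
      (Polynomial (ZMod 2) ⧸ I) := I.mkQ ∘ₗ g ∘ₗ (LinearMap.ker D).subtype
  have hfapp : ∀ z : LinearMap.ker D, f z = I.mkQ ((z : Fin 4 → Polynomial (ZMod 2)) 0
      + X * (z : Fin 4 → Polynomial (ZMod 2)) 2) := by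
    intro z
    simp [f, g, smul_eq_mul]
  have hle : N ≤ LinearMap.ker f := by
    rintro ⟨m, hmk⟩ hmem
    obtain ⟨n, hn⟩ := hmem
    rw [LinearMap.mem_ker, hfapp, Submodule.mkQ_apply, Submodule.Quotient.mk_eq_zero]
    have hmn : m = D n := by
      simpa using hn.symm
    show m 0 + X * m 2 ∈ I
    rw [hmn, hD]
    have heq : (![X * (n 0 + n 1), X * (n 0 + n 1),
        (n 0 + n 1) + X * (n 2 + n 3), (n 0 + n 1) + X * (n 2 + n 3)] : Fin 4 → _) 0
        + X * (![X * (n 0 + n 1), X * (n 0 + n 1),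
        (n 0 + n 1) + X * (n 2 + n 3), (n 0 + n 1) + X * (n 2 + n 3)] : Fin 4 → _) 2
        = X ^ 2 * (n 2 + n 3) := by
      simp only [Matrix.cons_val_zero, Matrix.cons_val_two, Matrix.tail_cons, Matrix.head_cons]
      linear_combination (X * (n 0 + n 1)) * h2
    rw [heq]
    exact Ideal.mem_span_singleton.2 (dvd_mul_right _ _)
  have hle' : LinearMap.ker f ≤ N := by
    rintro ⟨m, hmk⟩ hmem
    rw [LinearMap.mem_ker, hfapp, Submodule.mkQ_apply, Submodule.Quotient.mk_eq_zero] at hmem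
    obtain ⟨c, hc⟩ := Ideal.mem_span_singleton.1 hmem
    have hDm : D m = 0 := hmk
    rw [hD] at hDm
    have e0 : X * (m 0 + m 1) = 0 := congrFun hDm 0
    have e2 : (m 0 + m 1) + X * (m 2 + m 3) = 0 := congrFun hDm 2
    have hm1 : m 1 = m 0 := by
      rcases mul_eq_zero.1 e0 with h | h
      · exact absurd h Polynomial.X_ne_zero
      · linear_combination h - m 0 * h2
    have hm3 : m 3 = m 2 := by
      have e2' : X * (m 2 + m 3) = 0 := by
        linear_combination e2 - m 0 * h2 - hm1
      rcases mul_eq_zero.1 e2' with h | h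
      · exact absurd h Polynomial.X_ne_zero
      · linear_combination h - m 2 * h2
    refine Submodule.mem_comap.2 ⟨![X * c + m 2, 0, c, 0], ?_⟩
    rw [hD]
    funext i
    fin_cases i <;> simp <;>
      [ (linear_combination -hc + X * m 2 * h2);
        (linear_combination -hc + X * m 2 * h2 - hm1);
        (linear_combination X * c * h2);
        (linear_combination X * c * h2 - hm3) ]
  let F := N.liftQ f hle
  have hFsurj : Function.Surjective F := by
    intro q
    obtain ⟨p, rfl⟩ := Submodule.Quotient.mk_surjective I q
    refine ⟨Submodule.Quotient.mk ⟨p • (x₀ + x₁), Submodule.smul_mem _ p hker⟩, ?_⟩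
    have : F (Submodule.Quotient.mk ⟨p • (x₀ + x₁), Submodule.smul_mem _ p hker⟩)
        = f ⟨p • (x₀ + x₁), Submodule.smul_mem _ p hker⟩ := rfl
    rw [this, hfapp]
    simp [hx₀, hx₁, Pi.single_apply, smul_eq_mul]
  have hFinj : Function.Injective F :=
    LinearMap.ker_eq_bot.1 (Submodule.ker_liftQ_eq_bot N f hle hle')
  have hbij : Function.Bijective F := ⟨hFinj, hFsurj⟩
  refine ⟨hker, LinearEquiv.ofBijective F hbij, ?_⟩
  have : F (Submodule.Quotient.mk ⟨x₀ + x₁, hker⟩) = f ⟨x₀ + x₁, hker⟩ := rfl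
  rw [LinearEquiv.ofBijective_apply, this, hfapp]
  simp [hx₀, hx₁, Pi.single_apply]
end

section
/- Let V be a module over ZMod 2, and let d, a : V →ₗ[ZMod 2] V satisfy d ∘ d = 0, a ∘ a = LinearMap.id, d ∘ a = a ∘ d, and the freeness condition: for every v ∈ V with a v = v there exists w ∈ V with v = w + a w. Work in M := PolynomialModule (ZMod 2) V, and define D : M →ₗ M by D γ = (d applied coefficientwise to γ) + X • ((LinearMap.id + a) applied coefficientwise to γ). Then the transfer map is injective on homology: for every v ∈ V, if PolynomialModule.single 0 (v + a v) ∈ LinearMap.range D, then there exist u, w ∈ V with v = d u + w + a w. -/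
open Polynomial

/-- Injectivity half of the quasi-isomorphism lemma in Section 4 (free involutions): if the
transfer `single 0 (v + a v)` of a class is a boundary of the Borel differential
`D = d + e (1 + a)`, then `v` is a boundary in the coinvariant complex, i.e.
`v = d u + w + a w` for some `u, w`. -/
theorem stmt12 {V : Type*} [AddCommGroup V] [Module (ZMod 2) V]
    (d a : V →ₗ[ZMod 2] V)
    (hdd : d ∘ₗ d = 0) (haa : a ∘ₗ a = LinearMap.id) (hda : d ∘ₗ a = a ∘ₗ d)
    (hfree : ∀ v : V, a v = v → ∃ w : V, v = w + a w)
    (dc ac : PolynomialModule (ZMod 2) V →ₗ[ZMod 2] PolynomialModule (ZMod 2) V)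
    (hdc : ∀ (γ : PolynomialModule (ZMod 2) V) (n : ℕ), (dc γ).coeff n = d (γ.coeff n))
    (hac : ∀ (γ : PolynomialModule (ZMod 2) V) (n : ℕ), (ac γ).coeff n = γ.coeff n + a (γ.coeff n))
    (D : PolynomialModule (ZMod 2) V →ₗ[ZMod 2] PolynomialModule (ZMod 2) V)
    (hD : ∀ γ : PolynomialModule (ZMod 2) V,
      D γ = dc γ + (X : Polynomial (ZMod 2)) • ac γ) :
    ∀ v : V, PolynomialModule.single (ZMod 2) 0 (v + a v) ∈ LinearMap.range D →
      ∃ u w : V, v = d u + w + a w := by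
  intro v hv
  obtain ⟨γ, hγ⟩ := hv
  -- characteristic two helpers
  have addself : ∀ x : V, x + x = 0 := by
    intro x
    have : (2 : ZMod 2) • x = 0 := by
      have h2 : (2 : ZMod 2) = 0 := by decide
      rw [h2, zero_smul]
    simpa [two_smul] using this
  have cancel : ∀ x y : V, x + y = 0 → x = y := by
    intro x y h
    have : x + (y + y) = (x + y) + y := by abel
    rw [addself, h, add_zero, zero_add] at this
    exact this
  have dd' : ∀ x, d (d x) = 0 := fun x => by
    simpa using LinearMap.congr_fun hdd x
  have da' : ∀ x, d (a x) = a (d x) := fun x => by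
    simpa using LinearMap.congr_fun hda x
  -- main descent step
  have push : ∀ x y : V, d y = x + a x → (∃ w w' : V, y = d w + (w' + a w')) →
      ∃ u w'' : V, x = d u + (w'' + a w'') := by
    rintro x y hdy ⟨w, w', hy⟩
    have hdy' : d y = d w' + a (d w') := by
      rw [hy, map_add, map_add, dd', zero_add, da']
    have hzero : (x + d w') + (a x + a (d w')) = 0 := by
      have h1 : (x + a x) + (d w' + a (d w')) = 0 := by
        rw [← hdy, ← hdy']; exact addself _
      calc (x + d w') + (a x + a (d w'))
          = (x + a x) + (d w' + a (d w')) := by abel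
        _ = 0 := h1
    have hfix : a (x + d w') = x + d w' := by
      rw [map_add]; exact (cancel _ _ hzero).symm
    obtain ⟨w'', hw''⟩ := hfree _ hfix
    refine ⟨w', w'', ?_⟩
    calc x = (x + d w') + d w' := by rw [add_assoc, addself, add_zero]
      _ = d w' + (w'' + a w'') := by rw [hw'']; abel
  -- coefficientwise relations
  have hco : ∀ n : ℕ, d (γ.coeff n) + (if 1 ≤ n then γ.coeff (n - 1) + a (γ.coeff (n - 1)) else 0)
      = (PolynomialModule.single (ZMod 2) 0 (v + a v) : PolynomialModule (ZMod 2) V).coeff n := by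
    intro n
    have h := DFunLike.congr_fun (congrArg PolynomialModule.coeff hγ) n
    rw [hD, PolynomialModule.coeff_add, Finsupp.add_apply, hdc, ← Polynomial.monomial_one_one_eq_X,
      PolynomialModule.monomial_smul_apply] at h
    rw [← h]
    congr 1
    split_ifs with hn
    · rw [one_smul, hac]
    · rfl
  have h0 : d (γ.coeff 0) = v + a v := by
    have := hco 0
    simpa [PolynomialModule.coeff_single, Finsupp.single_apply] using this
  have hstep : ∀ n : ℕ, d (γ.coeff (n + 1)) = γ.coeff n + a (γ.coeff n) := by
    intro n
    have := hco (n + 1)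
    simp only [PolynomialModule.coeff_single, Finsupp.single_apply, Nat.le_add_left, if_true,
      Nat.add_sub_cancel] at this
    have hne : (0 : ℕ) ≠ n + 1 := by omega
    rw [if_neg hne] at this
    simpa using cancel _ _ this
  -- the coefficients of γ eventually vanish
  obtain ⟨N, hN⟩ : ∃ N : ℕ, ∀ n, N ≤ n → γ.coeff n = 0 := by
    refine ⟨(Finsupp.support γ.coeff).sup id + 1, fun n hn => ?_⟩
    by_contra h
    have hmem : n ∈ Finsupp.support γ.coeff := Finsupp.mem_support_iff.2 h
    have := Finset.le_sup (f := id) hmem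
    simp only [id] at this
    omega
  -- downward induction
  have key : ∀ k n : ℕ, N ≤ n + k → ∃ w w' : V, γ.coeff n = d w + (w' + a w') := by
    intro k
    induction k with
    | zero =>
      intro n hn
      refine ⟨0, 0, ?_⟩
      rw [hN n (by omega)]
      simp
    | succ k ih =>
      intro n hn
      rcases le_or_gt N (n + k) with h | h
      · exact ih n h
      · exact push (γ.coeff n) (γ.coeff (n + 1)) (hstep n) (ih (n + 1) (by omega))
  obtain ⟨u, w, hw⟩ := push v (γ.coeff 0) h0 (key N 0 (by omega))
  exact ⟨u, w, by rw [hw, add_assoc]⟩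
end

section
/- Let V be a module over ZMod 2, and let d, a : V →ₗ[ZMod 2] V satisfy d ∘ d = 0, a ∘ a = LinearMap.id, d ∘ a = a ∘ d, and the freeness condition: for every v ∈ V with a v = v there exists w ∈ V with v = w + a w. Work in M := PolynomialModule (ZMod 2) V, and define D : M →ₗ M by D γ = (d applied coefficientwise to γ) + X • ((LinearMap.id + a) applied coefficientwise to γ). Then the transfer map is surjective on homology: for every γ ∈ M with D γ = 0, there exist v ∈ V and δ ∈ M such that γ = PolynomialModule.single 0 (v + a v) + D δ. -/
open Polynomial

/-- Surjectivity half of the quasi-isomorphism lemma in Section 4 (free involutions): every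
cycle of the Borel differential `D = d + e (1 + a)` is homologous to a transfer class
`single 0 (v + a v)`. -/
theorem stmt13 {V : Type*} [AddCommGroup V] [Module (ZMod 2) V]
    (d a : V →ₗ[ZMod 2] V)
    (hdd : d ∘ₗ d = 0) (haa : a ∘ₗ a = LinearMap.id) (hda : d ∘ₗ a = a ∘ₗ d)
    (hfree : ∀ v : V, a v = v → ∃ w : V, v = w + a w)
    (dc ac : PolynomialModule (ZMod 2) V →ₗ[ZMod 2] PolynomialModule (ZMod 2) V)
    (hdc : ∀ (γ : PolynomialModule (ZMod 2) V) (n : ℕ), (dc γ).coeff n = d (γ.coeff n))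
    (hac : ∀ (γ : PolynomialModule (ZMod 2) V) (n : ℕ), (ac γ).coeff n = γ.coeff n + a (γ.coeff n))
    (D : PolynomialModule (ZMod 2) V →ₗ[ZMod 2] PolynomialModule (ZMod 2) V)
    (hD : ∀ γ : PolynomialModule (ZMod 2) V,
      D γ = dc γ + (X : Polynomial (ZMod 2)) • ac γ) :
    ∀ γ : PolynomialModule (ZMod 2) V, D γ = 0 →
      ∃ (v : V) (δ : PolynomialModule (ZMod 2) V),
        γ = PolynomialModule.single (ZMod 2) 0 (v + a v) + D δ := by
  -- characteristic 2 facts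
  have h2 : ∀ x : V, x + x = 0 := by
    intro x
    rw [← two_smul (ZMod 2) x, show (2 : ZMod 2) = 0 from rfl, zero_smul]
  have h2M : ∀ x : PolynomialModule (ZMod 2) V, x + x = 0 := by
    intro x
    rw [← two_smul (ZMod 2) x, show (2 : ZMod 2) = 0 from rfl, zero_smul]
  have h2n : ∀ x : V, (2 : ℕ) • x = 0 := fun x => by rw [two_nsmul, h2]
  have h2z : ∀ x : V, (2 : ℤ) • x = 0 := fun x => by rw [two_zsmul, h2]
  have hdd' : ∀ x : V, d (d x) = 0 := fun x => LinearMap.congr_fun hdd x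
  have haa' : ∀ x : V, a (a x) = x := fun x => LinearMap.congr_fun haa x
  have hda' : ∀ x : V, d (a x) = a (d x) := fun x => LinearMap.congr_fun hda x
  -- coefficients of X • γ
  have hXs : ∀ (γ : PolynomialModule (ZMod 2) V) (n : ℕ),
      ((X : Polynomial (ZMod 2)) • γ).coeff n = if 1 ≤ n then γ.coeff (n - 1) else 0 := by
    intro γ n
    rw [← Polynomial.monomial_one_one_eq_X, PolynomialModule.monomial_smul_apply]
    simp
  -- coefficients of D γ
  have hD0 : ∀ γ : PolynomialModule (ZMod 2) V, (D γ).coeff 0 = d (γ.coeff 0) := by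
    intro γ
    rw [hD, PolynomialModule.coeff_add, Finsupp.add_apply, hXs, hdc]
    simp
  have hDs : ∀ (γ : PolynomialModule (ZMod 2) V) (n : ℕ),
      (D γ).coeff (n + 1) = d (γ.coeff (n + 1)) + (γ.coeff n + a (γ.coeff n)) := by
    intro γ n
    rw [hD, PolynomialModule.coeff_add, Finsupp.add_apply, hXs, hdc]
    simp [hac]
  -- D ∘ D = 0
  have hDD : ∀ γ : PolynomialModule (ZMod 2) V, D (D γ) = 0 := by
    intro γ
    apply PolynomialModule.coeff_injective
    apply DFunLike.ext
    intro n
    rw [PolynomialModule.coeff_zero, Finsupp.zero_apply]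
    match n with
    | 0 => rw [hD0, hD0, hdd']
    | 1 =>
      rw [hDs, hDs, hD0]
      simp only [map_add, hdd']
      rw [hda' (γ.coeff 0)]
      abel_nf
      simp [h2n, h2z]
    | (m + 1) + 1 =>
      rw [hDs, hDs, hDs]
      simp only [map_add, hdd', haa']
      rw [hda' (γ.coeff (m+1))]
      abel_nf
      simp [h2n, h2z]
  -- main induction on the degree bound
  have key : ∀ N : ℕ, ∀ γ : PolynomialModule (ZMod 2) V, D γ = 0 →
      (∀ n, N < n → γ.coeff n = 0) →
      ∃ (v : V) (δ : PolynomialModule (ZMod 2) V),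
        γ = PolynomialModule.single (ZMod 2) 0 (v + a v) + D δ := by
    intro N
    induction N with
    | zero =>
      intro γ hγ hsupp
      -- coefficient 1 of D γ = 0 gives a (γ 0) = γ 0
      have h1 : γ.coeff 0 + a (γ.coeff 0) = 0 := by
        have := DFunLike.congr_fun (congrArg PolynomialModule.coeff hγ) 1
        rw [hDs γ 0] at this
        simpa [hsupp 1 (by norm_num)] using this
      have hfix : a (γ.coeff 0) = γ.coeff 0 := by
        have h := congrArg (γ.coeff 0 + ·) h1
        simp only [← add_assoc, h2, zero_add, add_zero] at h
        exact h
      obtain ⟨w, hw⟩ := hfree (γ.coeff 0) hfix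
      refine ⟨w, 0, ?_⟩
      rw [map_zero, add_zero]
      apply PolynomialModule.coeff_injective
      apply DFunLike.ext
      intro n
      rw [PolynomialModule.coeff_single, Finsupp.single_apply]
      match n with
      | 0 => simpa using hw
      | m + 1 =>
        rw [hsupp (m+1) (by norm_num), if_neg (by omega)]
    | succ N ih =>
      intro γ hγ hsupp
      -- the top coefficient is a-invariant
      have h1 : γ.coeff (N+1) + a (γ.coeff (N+1)) = 0 := by
        have := DFunLike.congr_fun (congrArg PolynomialModule.coeff hγ) (N+2)
        rw [hDs γ (N+1)] at this
        simpa [hsupp (N+2) (by omega)] using this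
      have hfix : a (γ.coeff (N+1)) = γ.coeff (N+1) := by
        have h := congrArg (γ.coeff (N+1) + ·) h1
        simp only [← add_assoc, h2, zero_add, add_zero] at h
        exact h
      obtain ⟨w, hw⟩ := hfree (γ.coeff (N+1)) hfix
      set δ₀ : PolynomialModule (ZMod 2) V := PolynomialModule.single (ZMod 2) N w with hδ₀
      set γ' : PolynomialModule (ZMod 2) V := γ + D δ₀ with hγ'
      have hγ'cycle : D γ' = 0 := by
        rw [hγ', map_add, hγ, hDD, add_zero]
      have hγ'supp : ∀ n, N < n → γ'.coeff n = 0 := by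
        intro n hn
        rw [hγ', PolynomialModule.coeff_add, Finsupp.add_apply]
        obtain ⟨m, rfl⟩ : ∃ m, n = m + 1 := ⟨n - 1, by omega⟩
        rw [hDs, hδ₀]
        simp only [PolynomialModule.coeff_single, Finsupp.single_apply]
        rcases eq_or_ne m N with rfl | hne
        · rw [if_neg (by omega), if_pos rfl, map_zero, zero_add, ← hw]
          exact h2 _
        · have hm : N < m := by omega
          rw [hsupp (m+1) (by omega), if_neg (by omega), if_neg (by omega)]
          simp
      obtain ⟨v, δ, hvδ⟩ := ih γ' hγ'cycle hγ'supp
      refine ⟨v, δ + δ₀, ?_⟩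
      have hγeq : γ = γ' + D δ₀ := by
        rw [hγ', add_assoc, h2M, add_zero]
      rw [hγeq, hvδ, map_add D δ δ₀, add_assoc]
  -- produce a degree bound for γ
  intro γ hγ
  have hbound : ∃ N : ℕ, ∀ n, N < n → γ.coeff n = 0 := by
    let f : ℕ →₀ V := γ.coeff
    refine ⟨f.support.sup id, fun n hn => ?_⟩
    have : n ∉ f.support := by
      intro hmem
      have := Finset.le_sup (f := id) hmem
      simp only [id] at this
      omega
    exact Finsupp.notMem_support_iff.mp this
  obtain ⟨N, hN⟩ := hbound
  exact key N γ hγ hN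
end
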